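/- arXiv:1711.05528 — 3 statements merged into one kernel-verified Lean document; each statement's English description precedes it below -/
import Mathlib

section
/- For every x ∈ dom(A), every t ≥ 0 and every y ∈ Y one has ⟨T(t)x − x, y⟩ = ∫₀ᵗ ⟨T(s)(Ax), y⟩ ds. -/
/-
Since `R(0) = (-A)⁻¹` is the weak Laplace transform of `T` at `0`, we have
`x = -R(0)(Ax) = -∫₀^∞ T(s)(Ax) ds` weakly. As `T(t)` commutes with `R(0)`, the semigroup law gives
`T(t)x = -R(0)(T(t)Ax) = -∫₀^∞ T(s + t)(Ax) ds = -∫ₜ^∞ T(s)(Ax) ds`, and subtracting the two tails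
leaves `∫₀ᵗ T(s)(Ax) ds`.
-/

open MeasureTheory Set

theorem setIntegral_Ioi_comp_add_right {E : Type*} [NormedAddCommGroup E] [NormedSpace ℝ E]
    (g : ℝ → E) (a t : ℝ) :
    ∫ s in Ioi a, g (s + t) = ∫ s in Ioi (a + t), g s := by
  have h := (measurePreserving_add_right volume t).setIntegral_preimage_emb
    (measurableEmbedding_addRight t) g (Ioi (a + t))
  rwa [preimage_add_const_Ioi, add_sub_cancel_right] at h

section WeakOrbit

variable {X : Type*} [NormedAddCommGroup X] [NormedSpace ℂ X]
  {T : ℝ → X →L[ℂ] X} (y : X →L[ℂ] ℂ)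

theorem setIntegral_Ioi_apply_orbit_shift
    (hTsg : ∀ s t : ℝ, 0 ≤ s → 0 ≤ t → T (t + s) = (T t).comp (T s))
    (z : X) {t : ℝ} (ht : 0 ≤ t) :
    ∫ s in Ioi (0 : ℝ), y (T s (T t z)) = ∫ s in Ioi t, y (T s z) := by
  calc ∫ s in Ioi (0 : ℝ), y (T s (T t z))
      = ∫ s in Ioi (0 : ℝ), y (T (s + t) z) :=
        setIntegral_congr_fun measurableSet_Ioi fun s hs => by
          rw [hTsg t s ht (le_of_lt hs), ContinuousLinearMap.comp_apply]
    _ = ∫ s in Ioi t, y (T s z) := by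
        rw [setIntegral_Ioi_comp_add_right (fun s => y (T s z)), zero_add]

theorem apply_orbit_sub_of_weak_laplace_zero
    (hTsg : ∀ s t : ℝ, 0 ≤ s → 0 ≤ t → T (t + s) = (T t).comp (T s))
    {R₀ : X →L[ℂ] X}
    (hlap : ∀ z : X, IntegrableOn (fun s => y (T s z)) (Ioi 0) ∧
      y (R₀ z) = ∫ s in Ioi (0 : ℝ), y (T s z))
    {t : ℝ} (ht : 0 ≤ t) (hcomm : (T t).comp R₀ = R₀.comp (T t)) (w : X) :
    y (T t (R₀ w) - R₀ w) = -∫ s in (0 : ℝ)..t, y (T s w) := by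
  have hTR : T t (R₀ w) = R₀ (T t w) := DFunLike.congr_fun hcomm w
  rw [map_sub, hTR, (hlap _).2, (hlap w).2, setIntegral_Ioi_apply_orbit_shift y hTsg w ht,
    ← intervalIntegral.integral_Ioi_sub_Ioi (hlap w).1 ht, neg_sub]

end WeakOrbit

theorem statement5_general
    {X : Type*} [NormedAddCommGroup X] [NormedSpace ℂ X]
    (Y : Submodule ℂ (X →L[ℂ] ℂ))
    (T : ℝ → X →L[ℂ] X)
    (hTsg : ∀ s t : ℝ, 0 ≤ s → 0 ≤ t → T (t + s) = (T t).comp (T s))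
    (dom : Submodule ℂ X) (A : X → X)
    (R : ℝ → X →L[ℂ] X)
    (hR2 : ∀ l : ℝ, 0 ≤ l → ∀ x ∈ dom, R l ((l : ℂ) • x - A x) = x)
    (hlap : ∀ l : ℝ, 0 ≤ l → ∀ (x : X), ∀ y ∈ Y,
      IntegrableOn (fun s : ℝ => Real.exp (-l * s) • y (T s x)) (Set.Ioi 0) ∧
      y (R l x) = ∫ s in Set.Ioi (0:ℝ), Real.exp (-l * s) • y (T s x))
    (hcomm : ∀ t : ℝ, 0 ≤ t → (T t).comp (R 0) = (R 0).comp (T t))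
    (x : X) (hx : x ∈ dom) (t : ℝ) (ht : 0 ≤ t) :
    ∀ y ∈ Y, y (T t x - x) = ∫ s in (0:ℝ)..t, y (T s (A x)) := by
  intro y hy
  have hlap0 : ∀ z : X, IntegrableOn (fun s => y (T s z)) (Ioi 0) ∧
      y (R 0 z) = ∫ s in Ioi (0 : ℝ), y (T s z) := fun z => by
    simpa using hlap 0 le_rfl z y hy
  have hRAx : R 0 (A x) = -x := by
    simpa [neg_eq_iff_eq_neg] using hR2 0 le_rfl x hx
  have key := apply_orbit_sub_of_weak_laplace_zero y hTsg hlap0 ht (hcomm t ht) (A x)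
  rw [hRAx, map_neg, neg_sub_neg, map_sub] at key
  rw [map_sub]
  linear_combination -key

/-- For every `x ∈ dom(A)`, `t ≥ 0` and `y ∈ Y`:
`⟨T(t)x − x, y⟩ = ∫₀ᵗ ⟨T(s)(Ax), y⟩ ds`. -/
theorem statement5
    {X : Type*} [NormedAddCommGroup X] [NormedSpace ℂ X] [CompleteSpace X]
    (Y : Submodule ℂ (X →L[ℂ] ℂ))
    (hnorming : ∀ x : X, ‖x‖ = sSup {r : ℝ | ∃ y ∈ Y, ‖y‖ ≤ 1 ∧ r = ‖y x‖})
    (T : ℝ → X →L[ℂ] X)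
    (hT0 : T 0 = 1)
    (hTsg : ∀ s t : ℝ, 0 ≤ s → 0 ≤ t → T (t + s) = (T t).comp (T s))
    (M ω : ℝ) (hM : 1 ≤ M) (hω : ω < 0)
    (hgrowth : ∀ t : ℝ, 0 ≤ t → ‖T t‖ ≤ M * Real.exp (ω * t))
    (dom : Submodule ℂ X) (A : X → X)
    (hA_add : ∀ x ∈ dom, ∀ y ∈ dom, A (x + y) = A x + A y)
    (hA_smul : ∀ (c : ℂ), ∀ x ∈ dom, A (c • x) = c • A x)
    (R : ℝ → X →L[ℂ] X)
    (hRdom : ∀ l : ℝ, 0 ≤ l → ∀ x : X, R l x ∈ dom)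
    (hR1 : ∀ l : ℝ, 0 ≤ l → ∀ x : X, (l : ℂ) • R l x - A (R l x) = x)
    (hR2 : ∀ l : ℝ, 0 ≤ l → ∀ x ∈ dom, R l ((l : ℂ) • x - A x) = x)
    (hmeas : ∀ (x : X), ∀ y ∈ Y, Measurable ((Set.Ici (0:ℝ)).restrict fun s : ℝ => y (T s x)))
    (hlap : ∀ l : ℝ, 0 ≤ l → ∀ (x : X), ∀ y ∈ Y,
      IntegrableOn (fun s : ℝ => Real.exp (-l * s) • y (T s x)) (Set.Ioi 0) ∧
      y (R l x) = ∫ s in Set.Ioi (0:ℝ), Real.exp (-l * s) • y (T s x))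
    (hcomm : ∀ t : ℝ, 0 ≤ t → (T t).comp (R 0) = (R 0).comp (T t))
    (x : X) (hx : x ∈ dom) (t : ℝ) (ht : 0 ≤ t) :
    ∀ y ∈ Y, y (T t x - x) = ∫ s in (0:ℝ)..t, y (T s (A x)) :=
  statement5_general Y T hTsg dom A R hR2 hlap hcomm x hx t ht
end

section
/- For every x ∈ F_α one has p_{F_α}(x) ≤ ‖x‖_{F_α} for every p ∈ 𝒫 and sup_{p∈𝒫} p_{F_α}(x) = ‖x‖_{F_α}. Moreover, if (x_n) ⊆ F_α satisfies sup_n ‖x_n‖_{F_α} < ∞ and is τ_{F_α}-Cauchy (i.e. for every p ∈ 𝒫, p_{F_α}(x_n − x_m) → 0 as n,m → ∞), then there exists x ∈ F_α with p_{F_α}(x_n − x) → 0 for every p ∈ 𝒫. (Thus the triple (F_α, ‖·‖_{F_α}, τ_{F_α}) again satisfies the standing assumptions.) -/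
/-!
The norm is the supremum of the seminorms `p ∈ 𝒫`; exchanging this supremum with the one over
`t > 0` gives `‖x‖_{F_α} = sup_p p_{F_α}(x)`.

For completeness, choose `t₀` with `‖T(t₀)‖ ≤ 1/2` (the growth bound is negative). Then
`‖z‖ ≤ ‖z - T(t₀)z‖ + ‖z‖/2` gives `‖z‖ ≤ 2 t₀^α ‖z‖_{F_α}`, so a `‖·‖_{F_α}`-bounded sequence
`(uₙ)` is norm bounded. Splitting `z = (z - T(t)z) + T(t)z` with `t` so large that `‖T(t)‖` is
negligible shows that a `τ_{F_α}`-Cauchy sequence is `τ`-Cauchy, hence `τ`-converges to some `x`.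
Bi-equicontinuity gives `T(t)(uₙ - x) → 0` in `τ`, so `p(T(t)uₙ - uₙ) → p(T(t)x - x)`; as a
seminorm is lower semicontinuous along such limits, the bounds on `p(T(t)uₙ - uₙ)` and on
`p(T(t)(uₘ - uₙ) - (uₘ - uₙ))` pass to the limit, giving `x ∈ F_α` and `p_{F_α}(uₘ - x) → 0`.
-/

open scoped Topology

/-- The Favard norm `‖z‖_{F_α} = sup_{t>0} t^{−α}‖T(t)z − z‖` (as a supremum in `ℝ`). -/
noncomputable def favNorm {X : Type*} [NormedAddCommGroup X] [NormedSpace ℝ X]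
    (T : ℝ → X →L[ℝ] X) (α : ℝ) (z : X) : ℝ :=
  sSup ((fun t : ℝ => ‖T t z - z‖ / t ^ α) '' Set.Ioi 0)

/-- Membership in the Favard space `F_α`. -/
def memFav {X : Type*} [NormedAddCommGroup X] [NormedSpace ℝ X]
    (T : ℝ → X →L[ℝ] X) (α : ℝ) (z : X) : Prop :=
  BddAbove ((fun t : ℝ => ‖T t z - z‖ / t ^ α) '' Set.Ioi 0)

/-- The seminorm `p_{F_α}(z) = sup_{t>0} t^{−α} p(T(t)z − z)`. -/
noncomputable def pFav {X : Type*} [NormedAddCommGroup X] [NormedSpace ℝ X]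
    (T : ℝ → X →L[ℝ] X) (α : ℝ) (p : Seminorm ℝ X) (z : X) : ℝ :=
  sSup ((fun t : ℝ => p (T t z - z) / t ^ α) '' Set.Ioi 0)

/-- Membership in the space `X_α ⊆ F_α`. -/
def memX {X : Type*} [NormedAddCommGroup X] [NormedSpace ℝ X]
    (P : Set (Seminorm ℝ X)) (T : ℝ → X →L[ℝ] X) (α : ℝ) (z : X) : Prop :=
  memFav T α z ∧
    ∀ p ∈ P, Filter.Tendsto (fun t : ℝ => p (T t z - z) / t ^ α)
      (nhdsWithin 0 (Set.Ioi 0)) (nhds 0)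

open Filter Set

theorem Seminorm.le_of_tendsto_sub {E ι : Type*} [AddCommGroup E] [Module ℝ E]
    (p : Seminorm ℝ E) {l : Filter ι} [l.NeBot] {v : ι → E} {w : E} {c : ℝ}
    (hv : Tendsto (fun n => p (v n - w)) l (𝓝 0)) (hc : ∀ᶠ n in l, p (v n) ≤ c) : p w ≤ c := by
  have hle : ∀ᶠ n in l, p w - c ≤ p (v n - w) := hc.mono fun n hn => by
    linarith [le_map_add_map_sub' p w (v n)]
  linarith [ge_of_tendsto hv hle]

theorem Seminorm.tendsto_sub_zero {E ι : Type*} [AddCommGroup E] [Module ℝ E]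
    (p : Seminorm ℝ E) {l : Filter ι} {v w : ι → E}
    (hv : Tendsto (fun n => p (v n)) l (𝓝 0)) (hw : Tendsto (fun n => p (w n)) l (𝓝 0)) :
    Tendsto (fun n => p (v n - w n)) l (𝓝 0) := by
  refine tendsto_of_tendsto_of_tendsto_of_le_of_le tendsto_const_nhds (by simpa using hv.add hw)
    (fun n => apply_nonneg p _) fun n => map_sub_le_add p _ _

section NormAsSupremum

variable {X : Type*} [NormedAddCommGroup X] [NormedSpace ℝ X] {P : Set (Seminorm ℝ X)}

theorem seminorm_le_norm_of_norm_eq_sSup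
    (hnorm : ∀ x : X, ‖x‖ = sSup {r : ℝ | ∃ p ∈ P, r = p x}) {p : Seminorm ℝ X} (hp : p ∈ P)
    (z : X) : p z ≤ ‖z‖ := by
  by_cases hb : BddAbove {r : ℝ | ∃ q ∈ P, r = q z}
  · rw [hnorm z]
    exact le_csSup hb ⟨p, hp, rfl⟩
  · have hz : z = 0 := norm_eq_zero.mp (by rw [hnorm z, Real.sSup_of_not_bddAbove hb])
    simp [hz]

theorem norm_le_of_forall_seminorm_le
    (hnorm : ∀ x : X, ‖x‖ = sSup {r : ℝ | ∃ p ∈ P, r = p x}) {z : X} {c : ℝ} (hc : 0 ≤ c)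
    (h : ∀ p ∈ P, p z ≤ c) : ‖z‖ ≤ c := by
  rw [hnorm z]
  exact Real.sSup_le (by rintro r ⟨p, hp, rfl⟩; exact h p hp) hc

theorem norm_le_of_tendsto_seminorm
    (hnorm : ∀ x : X, ‖x‖ = sSup {r : ℝ | ∃ p ∈ P, r = p x}) {u : ℕ → X} {x : X} {D : ℝ}
    (hu : ∀ n, ‖u n‖ ≤ D) (hx : ∀ p ∈ P, Tendsto (fun n => p (u n - x)) atTop (𝓝 0)) :
    ‖x‖ ≤ D :=
  norm_le_of_forall_seminorm_le hnorm ((norm_nonneg _).trans (hu 0)) fun p hp =>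
    p.le_of_tendsto_sub (hx p hp)
      (Eventually.of_forall fun n => (seminorm_le_norm_of_norm_eq_sSup hnorm hp _).trans (hu n))

end NormAsSupremum

section Favard

variable {X : Type*} [NormedAddCommGroup X] [NormedSpace ℝ X] {T : ℝ → X →L[ℝ] X} {α : ℝ}

/-- `p_{F_α}(z) < ∞`. By definition `memFav T α` and `favNorm T α` are `memPFav T α` and
`pFav T α` at `normSeminorm ℝ X`; the lemmas below are applied to them in this way. -/
def memPFav (T : ℝ → X →L[ℝ] X) (α : ℝ) (p : Seminorm ℝ X) (z : X) : Prop :=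
  BddAbove ((fun t : ℝ => p (T t z - z) / t ^ α) '' Ioi 0)

theorem pFav_nonneg (p : Seminorm ℝ X) (z : X) : 0 ≤ pFav T α p z := by
  refine Real.sSup_nonneg ?_
  rintro r ⟨t, ht, rfl⟩
  have := Real.rpow_pos_of_pos ht α
  positivity

theorem favNorm_nonneg (z : X) : 0 ≤ favNorm T α z :=
  pFav_nonneg (normSeminorm ℝ X) z

theorem le_pFav_mul {p : Seminorm ℝ X} {z : X} (hz : memPFav T α p z) {t : ℝ} (ht : 0 < t) :
    p (T t z - z) ≤ pFav T α p z * t ^ α := by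
  rw [← div_le_iff₀ (Real.rpow_pos_of_pos ht α)]
  exact le_csSup hz ⟨t, ht, rfl⟩

theorem memPFav_of_le {p : Seminorm ℝ X} {z : X} {C : ℝ}
    (h : ∀ t, 0 < t → p (T t z - z) ≤ C * t ^ α) : memPFav T α p z := by
  refine ⟨C, ?_⟩
  rintro r ⟨t, ht, rfl⟩
  exact (div_le_iff₀ (Real.rpow_pos_of_pos ht α)).2 (h t ht)

theorem pFav_le_of_le {p : Seminorm ℝ X} {z : X} {C : ℝ} (hC : 0 ≤ C)
    (h : ∀ t, 0 < t → p (T t z - z) ≤ C * t ^ α) : pFav T α p z ≤ C := by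
  refine Real.sSup_le ?_ hC
  rintro r ⟨t, ht, rfl⟩
  exact (div_le_iff₀ (Real.rpow_pos_of_pos ht α)).2 (h t ht)

theorem memPFav.mono {p q : Seminorm ℝ X} (hpq : ∀ y, p y ≤ q y) {z : X}
    (hz : memPFav T α q z) : memPFav T α p z :=
  memPFav_of_le fun _ ht => (hpq _).trans (le_pFav_mul hz ht)

theorem pFav_le_pFav {p q : Seminorm ℝ X} (hpq : ∀ y, p y ≤ q y) {z : X}
    (hz : memPFav T α q z) : pFav T α p z ≤ pFav T α q z :=
  pFav_le_of_le (pFav_nonneg q z) fun _ ht => (hpq _).trans (le_pFav_mul hz ht)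

theorem memPFav.sub {p : Seminorm ℝ X} {z w : X} (hz : memPFav T α p z)
    (hw : memPFav T α p w) : memPFav T α p (z - w) := by
  refine memPFav_of_le (C := pFav T α p z + pFav T α p w) fun t ht => ?_
  calc p (T t (z - w) - (z - w)) = p ((T t z - z) - (T t w - w)) := by
        rw [(T t).map_sub, sub_sub_sub_comm]
    _ ≤ p (T t z - z) + p (T t w - w) := map_sub_le_add p _ _
    _ ≤ pFav T α p z * t ^ α + pFav T α p w * t ^ α := add_le_add (le_pFav_mul hz ht)
        (le_pFav_mul hw ht)
    _ = (pFav T α p z + pFav T α p w) * t ^ α := by ring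

theorem pFav_le_favNorm {p : Seminorm ℝ X} (hp : ∀ y, p y ≤ ‖y‖) {z : X}
    (hz : memFav T α z) : pFav T α p z ≤ favNorm T α z :=
  pFav_le_pFav (q := normSeminorm ℝ X) hp hz

theorem sSup_pFav_eq_favNorm {P : Set (Seminorm ℝ X)}
    (hnorm : ∀ x : X, ‖x‖ = sSup {r : ℝ | ∃ p ∈ P, r = p x}) {z : X} (hz : memFav T α z) :
    sSup {r : ℝ | ∃ p ∈ P, r = pFav T α p z} = favNorm T α z := by
  have hle : ∀ p ∈ P, pFav T α p z ≤ favNorm T α z := fun p hp =>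
    pFav_le_favNorm (seminorm_le_norm_of_norm_eq_sSup hnorm hp) hz
  have hbdd : BddAbove {r : ℝ | ∃ p ∈ P, r = pFav T α p z} := by
    refine ⟨favNorm T α z, ?_⟩
    rintro r ⟨p, hp, rfl⟩
    exact hle p hp
  set S := sSup {r : ℝ | ∃ p ∈ P, r = pFav T α p z}
  have hS : 0 ≤ S := Real.sSup_nonneg (by rintro r ⟨p, -, rfl⟩; exact pFav_nonneg p z)
  refine le_antisymm (Real.sSup_le (by rintro r ⟨p, hp, rfl⟩; exact hle p hp)
    (favNorm_nonneg z)) ?_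
  refine pFav_le_of_le (p := normSeminorm ℝ X) hS fun t ht => ?_
  refine norm_le_of_forall_seminorm_le hnorm
    (mul_nonneg hS (Real.rpow_pos_of_pos ht α).le) fun p hp => ?_
  have hpz : memPFav T α p z :=
    memPFav.mono (q := normSeminorm ℝ X) (seminorm_le_norm_of_norm_eq_sSup hnorm hp) hz
  exact (le_pFav_mul hpz ht).trans
    (by gcongr; exact le_csSup hbdd ⟨p, hp, rfl⟩)

theorem tendsto_opNorm_atTop_of_growth {M ω : ℝ}
    (hgrowth : ∀ t : ℝ, 0 ≤ t → ‖T t‖ ≤ M * Real.exp (ω * t)) (hω : ω < 0) :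
    Tendsto (fun t => ‖T t‖) atTop (𝓝 0) := by
  have hdecay : Tendsto (fun t : ℝ => M * Real.exp (ω * t)) atTop (𝓝 0) := by
    simpa using (Real.tendsto_exp_atBot.comp (tendsto_id.const_mul_atTop_of_neg hω)).const_mul M
  exact tendsto_of_tendsto_of_tendsto_of_le_of_le' tendsto_const_nhds hdecay
    (Eventually.of_forall fun t => norm_nonneg _) ((eventually_ge_atTop 0).mono hgrowth)

theorem norm_le_two_mul_favNorm {t₀ : ℝ} (ht₀ : 0 < t₀) (hT : ‖T t₀‖ ≤ 1 / 2) {z : X}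
    (hz : memFav T α z) : ‖z‖ ≤ 2 * favNorm T α z * t₀ ^ α := by
  have hshift : ‖T t₀ z - z‖ ≤ favNorm T α z * t₀ ^ α :=
    le_pFav_mul (p := normSeminorm ℝ X) hz ht₀
  have hcontract : ‖T t₀ z‖ ≤ 1 / 2 * ‖z‖ := ((T t₀).le_opNorm z).trans (by gcongr)
  linarith [norm_le_insert' z (T t₀ z), norm_sub_rev z (T t₀ z)]

theorem cauchy_seminorm_of_cauchy_pFav {M ω : ℝ}
    (hgrowth : ∀ t : ℝ, 0 ≤ t → ‖T t‖ ≤ M * Real.exp (ω * t)) (hω : ω < 0)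
    {p : Seminorm ℝ X} (hp : ∀ y, p y ≤ ‖y‖) {u : ℕ → X} {D : ℝ} (hu : ∀ n, ‖u n‖ ≤ D)
    (hmem : ∀ n, memPFav T α p (u n))
    (hcauchy : ∀ ε > (0:ℝ), ∃ N : ℕ, ∀ m ≥ N, ∀ n ≥ N, pFav T α p (u m - u n) < ε) :
    ∀ ε > (0:ℝ), ∃ N : ℕ, ∀ m ≥ N, ∀ n ≥ N, p (u m - u n) < ε := by
  intro ε hε
  have hsmall := (tendsto_opNorm_atTop_of_growth hgrowth hω).mul_const (2 * D)
  rw [zero_mul] at hsmall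
  obtain ⟨t, ht, htε⟩ : ∃ t, 0 < t ∧ ‖T t‖ * (2 * D) < ε / 2 :=
    ((eventually_gt_atTop 0).and (hsmall.eventually_lt_const (half_pos hε))).exists
  have htα := Real.rpow_pos_of_pos ht α
  obtain ⟨N, hN⟩ := hcauchy (ε / 2 / t ^ α) (by positivity)
  refine ⟨N, fun m hm n hn => ?_⟩
  have hz : ‖u m - u n‖ ≤ 2 * D := (norm_sub_le _ _).trans (by linarith [hu m, hu n])
  calc p (u m - u n)
      ≤ p (T t (u m - u n)) + p (T t (u m - u n) - (u m - u n)) := le_map_add_map_sub' p _ _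
    _ ≤ ‖T t‖ * ‖u m - u n‖ + pFav T α p (u m - u n) * t ^ α :=
        add_le_add ((hp _).trans ((T t).le_opNorm _)) (le_pFav_mul ((hmem m).sub (hmem n)) ht)
    _ < ε / 2 + ε / 2 / t ^ α * t ^ α := by
        gcongr ?_ + ?_
        · exact (mul_le_mul_of_nonneg_left hz (norm_nonneg _)).trans_lt htε
        · exact mul_lt_mul_of_pos_right (hN m hm n hn) htα
    _ = ε := by field_simp; ring

theorem seminorm_orbit_sub_le_of_tendsto {p : Seminorm ℝ X} {u : ℕ → X} {x : X} {t c : ℝ}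
    (hinc : Tendsto (fun n => p (T t (u n - x) - (u n - x))) atTop (𝓝 0))
    (hc : ∀ᶠ n in atTop, p (T t (u n) - u n) ≤ c) : p (T t x - x) ≤ c :=
  p.le_of_tendsto_sub (by convert hinc using 3; rw [(T t).map_sub]; abel) hc

theorem memFav_of_tendsto {P : Set (Seminorm ℝ X)}
    (hnorm : ∀ x : X, ‖x‖ = sSup {r : ℝ | ∃ p ∈ P, r = p x}) {u : ℕ → X} {x : X} {C : ℝ}
    (hmem : ∀ n, memFav T α (u n)) (hbnd : ∀ n, favNorm T α (u n) ≤ C)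
    (hinc : ∀ p ∈ P, ∀ t > (0:ℝ),
      Tendsto (fun n => p (T t (u n - x) - (u n - x))) atTop (𝓝 0)) :
    memFav T α x := by
  have hC : 0 ≤ C := (favNorm_nonneg _).trans (hbnd 0)
  refine memPFav_of_le (p := normSeminorm ℝ X) (C := C) fun t ht =>
    norm_le_of_forall_seminorm_le hnorm (by positivity) fun p hp => ?_
  refine seminorm_orbit_sub_le_of_tendsto (hinc p hp t ht) (Eventually.of_forall fun n => ?_)
  calc p (T t (u n) - u n) ≤ ‖T t (u n) - u n‖ := seminorm_le_norm_of_norm_eq_sSup hnorm hp _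
    _ ≤ favNorm T α (u n) * t ^ α := le_pFav_mul (p := normSeminorm ℝ X) (hmem n) ht
    _ ≤ C * t ^ α := by gcongr; exact hbnd n

theorem tendsto_pFav_of_cauchy {p : Seminorm ℝ X} {u : ℕ → X} {x : X}
    (hmem : ∀ n, memPFav T α p (u n))
    (hcauchy : ∀ ε > (0:ℝ), ∃ N : ℕ, ∀ m ≥ N, ∀ n ≥ N, pFav T α p (u m - u n) < ε)
    (hinc : ∀ t > (0:ℝ), Tendsto (fun n => p (T t (u n - x) - (u n - x))) atTop (𝓝 0)) :
    Tendsto (fun n => pFav T α p (u n - x)) atTop (𝓝 0) := by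
  refine tendsto_order.2 ⟨fun a ha => Eventually.of_forall fun n => ha.trans_le
    (pFav_nonneg p _), fun ε hε => ?_⟩
  obtain ⟨N, hN⟩ := hcauchy (ε / 2) (half_pos hε)
  refine eventually_atTop.2 ⟨N, fun m hm => lt_of_le_of_lt ?_ (half_lt_self hε)⟩
  refine pFav_le_of_le (half_pos hε).le fun t ht =>
    seminorm_orbit_sub_le_of_tendsto (u := fun n => u m - u n) ?_
      (eventually_atTop.2 ⟨N, fun n hn => ?_⟩)
  · convert hinc t ht using 2 with n
    rw [← map_neg_eq_map p]
    congr 1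
    simp only [map_sub]
    abel
  · exact (le_pFav_mul ((hmem m).sub (hmem n)) ht).trans (by gcongr; exact (hN m hm n hn).le)

end Favard

theorem statement9_general
    {X : Type*} [NormedAddCommGroup X] [NormedSpace ℝ X]
    (P : Set (Seminorm ℝ X))
    (hnorm : ∀ x : X, ‖x‖ = sSup {r : ℝ | ∃ p ∈ P, r = p x})
    (hcomplete : ∀ (u : ℕ → X) (C : ℝ), (∀ n, ‖u n‖ ≤ C) →
      (∀ p ∈ P, ∀ ε > (0:ℝ), ∃ N : ℕ, ∀ m ≥ N, ∀ n ≥ N, p (u m - u n) < ε) →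
      ∃ x : X, ∀ p ∈ P, Filter.Tendsto (fun n => p (u n - x)) Filter.atTop (𝓝 0))
    (T : ℝ → X →L[ℝ] X)
    (M ω : ℝ) (hω : ω < 0)
    (hgrowth : ∀ t : ℝ, 0 ≤ t → ‖T t‖ ≤ M * Real.exp (ω * t))
    (hbieq : ∀ (u : ℕ → X) (C : ℝ), (∀ n, ‖u n‖ ≤ C) →
      (∀ p ∈ P, Filter.Tendsto (fun n => p (u n)) Filter.atTop (𝓝 0)) →
      ∀ t₀ > (0:ℝ), ∀ p ∈ P, ∀ ε > (0:ℝ), ∃ N : ℕ, ∀ n ≥ N, ∀ s ∈ Set.Icc (0:ℝ) t₀,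
        p (T s (u n)) < ε)
    (α : ℝ)
    :
    (∀ x : X, memFav T α x →
      (∀ p ∈ P, pFav T α p x ≤ favNorm T α x) ∧
      sSup {r : ℝ | ∃ p ∈ P, r = pFav T α p x} = favNorm T α x) ∧
    (∀ (u : ℕ → X) (C : ℝ), (∀ n, memFav T α (u n)) → (∀ n, favNorm T α (u n) ≤ C) →
      (∀ p ∈ P, ∀ ε > (0:ℝ), ∃ N : ℕ, ∀ m ≥ N, ∀ n ≥ N, pFav T α p (u m - u n) < ε) →
      ∃ x : X, memFav T α x ∧
        ∀ p ∈ P, Filter.Tendsto (fun n => pFav T α p (u n - x)) Filter.atTop (𝓝 0)) := by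
  have hP : ∀ p ∈ P, ∀ y : X, p y ≤ ‖y‖ := fun p hp => seminorm_le_norm_of_norm_eq_sSup hnorm hp
  refine ⟨fun x hx => ⟨fun p hp => pFav_le_favNorm (hP p hp) hx, sSup_pFav_eq_favNorm hnorm hx⟩,
    fun u C hmem hbnd hcauchy => ?_⟩
  have hmemP : ∀ p ∈ P, ∀ n, memPFav T α p (u n) := fun p hp n =>
    memPFav.mono (q := normSeminorm ℝ X) (hP p hp) (hmem n)
  obtain ⟨t₀, ht₀, hT₀⟩ : ∃ t₀, 0 < t₀ ∧ ‖T t₀‖ ≤ 1 / 2 := ((eventually_gt_atTop 0).and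
    ((tendsto_opNorm_atTop_of_growth hgrowth hω).eventually_le_const (by norm_num))).exists
  have hu : ∀ n, ‖u n‖ ≤ 2 * C * t₀ ^ α := fun n =>
    (norm_le_two_mul_favNorm ht₀ hT₀ (hmem n)).trans (by gcongr; exact hbnd n)
  obtain ⟨x, hx⟩ := hcomplete u _ hu fun p hp =>
    cauchy_seminorm_of_cauchy_pFav hgrowth hω (hP p hp) hu (hmemP p hp) (hcauchy p hp)
  have hux : ∀ n, ‖u n - x‖ ≤ 2 * (2 * C * t₀ ^ α) := fun n => (norm_sub_le _ _).trans
    (by linarith [hu n, norm_le_of_tendsto_seminorm hnorm hu hx])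
  have hinc : ∀ p ∈ P, ∀ t > (0:ℝ),
      Tendsto (fun n => p (T t (u n - x) - (u n - x))) atTop (𝓝 0) := by
    intro p hp t ht
    refine p.tendsto_sub_zero (tendsto_order.2 ⟨fun a ha => .of_forall fun n =>
      ha.trans_le (apply_nonneg _ _), fun ε hε => ?_⟩) (hx p hp)
    obtain ⟨N, hN⟩ := hbieq _ _ hux hx t ht p hp ε hε
    exact eventually_atTop.2 ⟨N, fun n hn => hN n hn t ⟨ht.le, le_rfl⟩⟩
  exact ⟨x, memFav_of_tendsto hnorm hmem hbnd hinc,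
    fun p hp => tendsto_pFav_of_cauchy (hmemP p hp) (hcauchy p hp) (hinc p hp)⟩

/-- For `x ∈ F_α` one has `p_{F_α}(x) ≤ ‖x‖_{F_α}` for all `p ∈ 𝒫` and
`sup_{p∈𝒫} p_{F_α}(x) = ‖x‖_{F_α}`; moreover every `‖·‖_{F_α}`-bounded
`τ_{F_α}`-Cauchy sequence in `F_α` converges in `τ_{F_α}` to some `x ∈ F_α`. -/
theorem statement9
    {X : Type*} [NormedAddCommGroup X] [NormedSpace ℝ X] [CompleteSpace X]
    (P : Set (Seminorm ℝ X))
    (hnorm : ∀ x : X, ‖x‖ = sSup {r : ℝ | ∃ p ∈ P, r = p x})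
    (hcomplete : ∀ (u : ℕ → X) (C : ℝ), (∀ n, ‖u n‖ ≤ C) →
      (∀ p ∈ P, ∀ ε > (0:ℝ), ∃ N : ℕ, ∀ m ≥ N, ∀ n ≥ N, p (u m - u n) < ε) →
      ∃ x : X, ∀ p ∈ P, Filter.Tendsto (fun n => p (u n - x)) Filter.atTop (𝓝 0))
    (T : ℝ → X →L[ℝ] X) (hT0 : T 0 = 1)
    (hTsg : ∀ s t : ℝ, 0 ≤ s → 0 ≤ t → T (t + s) = (T t).comp (T s))
    (M ω : ℝ) (hM : 1 ≤ M) (hω : ω < 0)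
    (hgrowth : ∀ t : ℝ, 0 ≤ t → ‖T t‖ ≤ M * Real.exp (ω * t))
    (horbit : ∀ x : X, ∀ p ∈ P, ∀ t₀ : ℝ, 0 ≤ t₀ →
      Filter.Tendsto (fun t : ℝ => p (T t x - T t₀ x)) (𝓝[Set.Ici 0] t₀) (𝓝 0))
    (hbieq : ∀ (u : ℕ → X) (C : ℝ), (∀ n, ‖u n‖ ≤ C) →
      (∀ p ∈ P, Filter.Tendsto (fun n => p (u n)) Filter.atTop (𝓝 0)) →
      ∀ t₀ > (0:ℝ), ∀ p ∈ P, ∀ ε > (0:ℝ), ∃ N : ℕ, ∀ n ≥ N, ∀ s ∈ Set.Icc (0:ℝ) t₀,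
        p (T s (u n)) < ε)
    (α : ℝ) (hα : α ∈ Set.Ioo (0:ℝ) 1)
    :
    (∀ x : X, memFav T α x →
      (∀ p ∈ P, pFav T α p x ≤ favNorm T α x) ∧
      sSup {r : ℝ | ∃ p ∈ P, r = pFav T α p x} = favNorm T α x) ∧
    (∀ (u : ℕ → X) (C : ℝ), (∀ n, memFav T α (u n)) → (∀ n, favNorm T α (u n) ≤ C) →
      (∀ p ∈ P, ∀ ε > (0:ℝ), ∃ N : ℕ, ∀ m ≥ N, ∀ n ≥ N, pFav T α p (u m - u n) < ε) →
      ∃ x : X, memFav T α x ∧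
        ∀ p ∈ P, Filter.Tendsto (fun n => pFav T α p (u n - x)) Filter.atTop (𝓝 0)) :=
  statement9_general P hnorm hcomplete T M ω hω hgrowth hbieq α
end

section
/- The semigroup is locally bi-equicontinuous on F_α with respect to the seminorms p_{F_α}: if (x_n) is a sequence in F_α with sup_n ‖x_n‖_{F_α} < ∞ and p_{F_α}(x_n) → 0 for every p ∈ 𝒫, then for every t₀ > 0 and every p ∈ 𝒫 one has sup_{t∈[0,t₀]} p_{F_α}(T(t)x_n) → 0 as n → ∞. -/
open scoped Topology

section Favard

variable {X : Type*} [NormedAddCommGroup X] [NormedSpace ℝ X]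

theorem Seminorm.le_norm_of_norm_eq_sSup {P : Set (Seminorm ℝ X)}
    (hnorm : ∀ x : X, ‖x‖ = sSup {r : ℝ | ∃ p ∈ P, r = p x})
    {p : Seminorm ℝ X} (hp : p ∈ P) (x : X) : p x ≤ ‖x‖ := by
  by_cases hb : BddAbove {r : ℝ | ∃ q ∈ P, r = q x}
  · rw [hnorm x]
    exact le_csSup hb ⟨p, hp, rfl⟩
  · -- an unbounded set has the junk supremum `0`, so `‖x‖ = 0`
    have hx : x = 0 := norm_eq_zero.mp (by rw [hnorm x, Real.sSup_of_not_bddAbove hb])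
    simp [hx]

theorem Seminorm.map_rpow_inv_smul (p : Seminorm ℝ X) {s : ℝ} (hs : 0 < s) (α : ℝ) (x : X) :
    p ((s ^ α)⁻¹ • x) = p x / s ^ α := by
  rw [map_smul_eq_mul, Real.norm_eq_abs, abs_inv, abs_of_pos (Real.rpow_pos_of_pos hs α),
    inv_mul_eq_div]

variable (T : ℝ → X →L[ℝ] X) (α : ℝ)

noncomputable def favQuot (s : ℝ) (z : X) : X := (s ^ α)⁻¹ • (T s z - z)

variable {T α}

theorem bddAbove_pFav_image {p : Seminorm ℝ X} (hp : ∀ x, p x ≤ ‖x‖) {z : X}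
    (hz : memFav T α z) :
    BddAbove ((fun t : ℝ => p (T t z - z) / t ^ α) '' Set.Ioi 0) := by
  obtain ⟨b, hb⟩ := hz
  refine ⟨b, ?_⟩
  rintro _ ⟨t, ht, rfl⟩
  calc p (T t z - z) / t ^ α ≤ ‖T t z - z‖ / t ^ α := by
        gcongr
        · exact (Real.rpow_pos_of_pos ht α).le
        · exact hp _
    _ ≤ b := hb ⟨t, ht, rfl⟩

theorem favQuot_le_pFav {p : Seminorm ℝ X} {z : X}
    (hbdd : BddAbove ((fun t : ℝ => p (T t z - z) / t ^ α) '' Set.Ioi 0))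
    {s : ℝ} (hs : 0 < s) : p (favQuot T α s z) ≤ pFav T α p z := by
  rw [favQuot, p.map_rpow_inv_smul hs]
  exact le_csSup hbdd ⟨s, hs, rfl⟩

theorem norm_favQuot_le_favNorm {z : X} (hz : memFav T α z) {s : ℝ} (hs : 0 < s) :
    ‖favQuot T α s z‖ ≤ favNorm T α z :=
  favQuot_le_pFav (p := normSeminorm ℝ X) hz hs

theorem exists_lt_favQuot_of_lt_pFav
    (hTsg : ∀ s t : ℝ, 0 ≤ s → 0 ≤ t → T (t + s) = (T t).comp (T s))
    {p : Seminorm ℝ X} {z : X} {t c : ℝ} (ht : 0 ≤ t) (hc : c < pFav T α p (T t z)) :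
    ∃ s > 0, c < p (T t (favQuot T α s z)) := by
  obtain ⟨_, ⟨s, hs, rfl⟩, hlt⟩ := exists_lt_of_lt_csSup (Set.image_nonempty.mpr
    Set.nonempty_Ioi) hc
  have hcomm : T s (T t z) = T t (T s z) := by
    rw [← ContinuousLinearMap.comp_apply, ← ContinuousLinearMap.comp_apply,
      ← hTsg t s ht (le_of_lt hs), ← hTsg s t (le_of_lt hs) ht, add_comm]
  refine ⟨s, hs, ?_⟩
  rwa [favQuot, map_smul, p.map_rpow_inv_smul hs, map_sub, ← hcomm]

end Favard

theorem statement13_general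
    {X : Type*} [NormedAddCommGroup X] [NormedSpace ℝ X]
    (P : Set (Seminorm ℝ X))
    (hnorm : ∀ x : X, ‖x‖ = sSup {r : ℝ | ∃ p ∈ P, r = p x})
    (T : ℝ → X →L[ℝ] X)
    (hTsg : ∀ s t : ℝ, 0 ≤ s → 0 ≤ t → T (t + s) = (T t).comp (T s))
    (hbieq : ∀ (u : ℕ → X) (C : ℝ), (∀ n, ‖u n‖ ≤ C) →
      (∀ p ∈ P, Filter.Tendsto (fun n => p (u n)) Filter.atTop (𝓝 0)) →
      ∀ t₀ > (0:ℝ), ∀ p ∈ P, ∀ ε > (0:ℝ), ∃ N : ℕ, ∀ n ≥ N, ∀ s ∈ Set.Icc (0:ℝ) t₀,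
        p (T s (u n)) < ε)
    (α : ℝ)
    (u : ℕ → X) (huF : ∀ n, memFav T α (u n))
    (C : ℝ) (hC : ∀ n, favNorm T α (u n) ≤ C)
    (hconv : ∀ p ∈ P, Filter.Tendsto (fun n => pFav T α p (u n)) Filter.atTop (𝓝 0)) :
    ∀ t₀ > (0:ℝ), ∀ p ∈ P, ∀ ε > (0:ℝ), ∃ N : ℕ, ∀ n ≥ N, ∀ t ∈ Set.Icc (0:ℝ) t₀,
      pFav T α p (T t (u n)) < ε := by
  intro t₀ ht₀ p hp ε hε
  by_contra! hcon
  choose n hn t ht hεle using hcon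
  have hbig : ∀ k, ∃ s > 0, ε / 2 < p (T (t k) (favQuot T α s (u (n k)))) := fun k =>
    exists_lt_favQuot_of_lt_pFav hTsg (ht k).1 ((half_lt_self hε).trans_le (hεle k))
  choose s hs hsp using hbig
  set w : ℕ → X := fun k => favQuot T α (s k) (u (n k))
  have hwC : ∀ k, ‖w k‖ ≤ C := fun k =>
    (norm_favQuot_le_favNorm (huF (n k)) (hs k)).trans (hC (n k))
  have hw0 : ∀ q ∈ P, Filter.Tendsto (fun k => q (w k)) Filter.atTop (𝓝 0) := by
    intro q hq
    have hq_le := Seminorm.le_norm_of_norm_eq_sSup hnorm hq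
    refine squeeze_zero (fun k => apply_nonneg q (w k))
      (fun k => favQuot_le_pFav (bddAbove_pFav_image hq_le (huF (n k))) (hs k)) ?_
    exact (hconv q hq).comp (Filter.tendsto_atTop_mono hn Filter.tendsto_id)
  obtain ⟨N, hN⟩ := hbieq w C hwC hw0 t₀ ht₀ p hp (ε / 2) (half_pos hε)
  exact (hN N le_rfl (t N) (ht N)).not_gt (hsp N)

/-- The semigroup is locally bi-equicontinuous on `F_α` for the
seminorms `p_{F_α}`: if `(x_n) ⊆ F_α` is `‖·‖_{F_α}`-bounded and `p_{F_α}(x_n) → 0`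
for every `p ∈ 𝒫`, then `sup_{t∈[0,t₀]} p_{F_α}(T(t)x_n) → 0` for every `t₀ > 0`, `p ∈ 𝒫`. -/
theorem statement13
    {X : Type*} [NormedAddCommGroup X] [NormedSpace ℝ X] [CompleteSpace X]
    (P : Set (Seminorm ℝ X))
    (hnorm : ∀ x : X, ‖x‖ = sSup {r : ℝ | ∃ p ∈ P, r = p x})
    (hcomplete : ∀ (u : ℕ → X) (C : ℝ), (∀ n, ‖u n‖ ≤ C) →
      (∀ p ∈ P, ∀ ε > (0:ℝ), ∃ N : ℕ, ∀ m ≥ N, ∀ n ≥ N, p (u m - u n) < ε) →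
      ∃ x : X, ∀ p ∈ P, Filter.Tendsto (fun n => p (u n - x)) Filter.atTop (𝓝 0))
    (T : ℝ → X →L[ℝ] X) (hT0 : T 0 = 1)
    (hTsg : ∀ s t : ℝ, 0 ≤ s → 0 ≤ t → T (t + s) = (T t).comp (T s))
    (M ω : ℝ) (hM : 1 ≤ M) (hω : ω < 0)
    (hgrowth : ∀ t : ℝ, 0 ≤ t → ‖T t‖ ≤ M * Real.exp (ω * t))
    (horbit : ∀ x : X, ∀ p ∈ P, ∀ t₀ : ℝ, 0 ≤ t₀ →
      Filter.Tendsto (fun t : ℝ => p (T t x - T t₀ x)) (𝓝[Set.Ici 0] t₀) (𝓝 0))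
    (hbieq : ∀ (u : ℕ → X) (C : ℝ), (∀ n, ‖u n‖ ≤ C) →
      (∀ p ∈ P, Filter.Tendsto (fun n => p (u n)) Filter.atTop (𝓝 0)) →
      ∀ t₀ > (0:ℝ), ∀ p ∈ P, ∀ ε > (0:ℝ), ∃ N : ℕ, ∀ n ≥ N, ∀ s ∈ Set.Icc (0:ℝ) t₀,
        p (T s (u n)) < ε)
    (α : ℝ) (hα : α ∈ Set.Ioo (0:ℝ) 1)
    (u : ℕ → X) (huF : ∀ n, memFav T α (u n))
    (C : ℝ) (hC : ∀ n, favNorm T α (u n) ≤ C)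
    (hconv : ∀ p ∈ P, Filter.Tendsto (fun n => pFav T α p (u n)) Filter.atTop (𝓝 0)) :
    ∀ t₀ > (0:ℝ), ∀ p ∈ P, ∀ ε > (0:ℝ), ∃ N : ℕ, ∀ n ≥ N, ∀ t ∈ Set.Icc (0:ℝ) t₀,
      pFav T α p (T t (u n)) < ε :=
  statement13_general P hnorm T hTsg hbieq α u huF C hC hconv
end
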